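/- (Powers in the doubling sequence.) Let ω be a nonempty finite word over {a,b}. Then: (1) if ωω is a factor of D∞ then |ω| is a power of 2 (i.e., |ω| = 2^{m−1} for some m ≥ 1); (2) ωω is a factor of D∞ if and only if ωωω is a factor of D∞; (3) ωωωω is never a factor of D∞ (D∞ contains no fourth powers). -/

import Mathlib

namespace PD

/-- The period-doubling substitution on the alphabet `Bool`,
where `false` stands for the letter `a` and `true` for the letter `b`:
`σ(a) = ab`, `σ(b) = aa`. -/
def sub : Bool → List Bool
  | false => [false, true]
  | true  => [false, false]

/-- The substitution applied to a finite word. -/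
def subW (w : List Bool) : List Bool := w.flatMap sub

/-- `A m = σ^m(a)`. -/
def A (m : ℕ) : List Bool := subW^[m] [false]

/-- `B m = σ^m(b)`. -/
def B (m : ℕ) : List Bool := subW^[m] [true]

/-- The doubling sequence `D∞` (0-indexed: `D n` is the `(n+1)`-th letter),
the fixed point of `σ` beginning with `a`; `A m` is a prefix of `A (m+1)`,
and `A (n+1)` has length `2^(n+1) > n`. -/
def D (n : ℕ) : Bool := (A (n + 1)).getD n false

/-- `δ m`, the last letter of `A m`. -/
def delta (m : ℕ) : Bool := (A m).getLastD false

/-- The envelope words (`i ∈ {1,2}`): `E m 1 = A m` minus its last letter,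
`E m 2 = A (m-1) ++ (A m` minus its last letter `)`. -/
def E (m i : ℕ) : List Bool :=
  if i = 1 then (A m).dropLast else A (m - 1) ++ (A m).dropLast

/-- `w` occurs at the (1-indexed) position `j` in the finite word `τ`. -/
def OccursIn (w τ : List Bool) (j : ℕ) : Prop :=
  1 ≤ j ∧ (τ.drop (j - 1)).take w.length = w

/-- `w` occurs at the (1-indexed) position `j` in the doubling sequence. -/
def OccursD (w : List Bool) (j : ℕ) : Prop :=
  1 ≤ j ∧ ∀ k < w.length, D (j - 1 + k) = w.getD k false

/-- `w` is a factor of the doubling sequence. -/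
def FactorD (w : List Bool) : Prop := ∃ j, OccursD w j

/-- `L w p`: the (1-indexed) starting position of the `p`-th occurrence of `w`
in the doubling sequence, occurrences being ordered by starting position.
(Each factor occurs infinitely often, so `Nat.nth` enumerates all occurrences
in increasing order.) -/
noncomputable def L (w : List Bool) (p : ℕ) : ℕ := Nat.nth (OccursD w) (p - 1)

/-- The strict total order on envelope words:
`E m₁ i₁ ⊏ E m₂ i₂` iff `m₁ < m₂`, or `m₁ = m₂` and `i₁ < i₂`. -/
def EnvLt (m₁ i₁ m₂ i₂ : ℕ) : Prop := m₁ < m₂ ∨ (m₁ = m₂ ∧ i₁ < i₂)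

/-- `Env(w) = E m i`: the envelope word `E m i` is the `⊏`-minimal envelope
word containing `w` as a factor. -/
def IsEnv (w : List Bool) (m i : ℕ) : Prop :=
  1 ≤ m ∧ (i = 1 ∨ i = 2) ∧ w <:+: E m i ∧
    ∀ m' i', 1 ≤ m' → (i' = 1 ∨ i' = 2) → EnvLt m' i' m i → ¬ w <:+: E m' i'

/-- The substitution `φ₁(a) = a`, `φ₁(b) = bb`. -/
def phi1 : Bool → List Bool
  | false => [false]
  | true  => [true, true]

/-- `Θ₁ = φ₁(D∞)` (0-indexed): `φ₁(A (n+1))` is a prefix of `Θ₁` of length `> n`. -/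
def Theta1 (n : ℕ) : Bool := ((A (n + 1)).flatMap phi1).getD n false

/-- The substitution `φ₂(a) = ab`, `φ₂(b) = acac`, over the alphabet `Fin 3`
where `0` stands for `a`, `1` for `b` and `2` for `c`. -/
def phi2 : Bool → List (Fin 3)
  | false => [0, 1]
  | true  => [0, 2, 0, 2]

/-- `Θ₂ = φ₂(D∞)` (0-indexed). -/
def Theta2 (n : ℕ) : Fin 3 := ((A (n + 1)).flatMap phi2).getD n 0

/-- `N₁(x,p)`: the number of letters `x` among the first `p` letters of `Θ₁`. -/
def N1 (x : Bool) (p : ℕ) : ℕ := ((List.range p).map Theta1).count x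

/-- `N₂(x,p)`: the number of letters `x` among the first `p` letters of `Θ₂`. -/
def N2 (x : Fin 3) (p : ℕ) : ℕ := ((List.range p).map Theta2).count x

end PD

open PD

/-!
Since `σ(D∞) = D∞`, every even position of `D∞` carries `a` and `D∞[2k+1]` is the other letter
than `D∞[k]`. So `b` occurs only at odd positions and `bb` never occurs, hence neither does `aaaa`
(the letters at two consecutive odd positions cannot both be `a`). A stretch of odd period
`n ≥ 3` of length `2n` is then impossible, since a `b` in it would recur at a position of the
other parity; period `1` means a run of `a`s, of length at most `3`. A stretch of even period
`2m` at `i`, read at its odd positions, gives a stretch of period `m` and half the length at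
`⌊i/2⌋`; conversely `σ` doubles periodic stretches. Induction on the period gives the three
claims; the cube is obtained by doubling back a cube of half the period, starting from `aaa`.
-/

namespace PD

lemma sub_eq (x : Bool) : sub x = [false, !x] := by cases x <;> rfl

lemma subW_cons (x : Bool) (l : List Bool) : subW (x :: l) = sub x ++ subW l :=
  List.flatMap_cons ..

lemma subW_append (l₁ l₂ : List Bool) : subW (l₁ ++ l₂) = subW l₁ ++ subW l₂ :=
  List.flatMap_append ..

lemma length_subW (l : List Bool) : (subW l).length = 2 * l.length := by
  induction l with
  | nil => rfl
  | cons x l ih =>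
    simp only [subW_cons, sub_eq, List.length_append, List.length_cons, List.length_nil, ih]
    ring

lemma getD_subW_two_mul (l : List Bool) (k : ℕ) : (subW l).getD (2 * k) false = false := by
  induction l generalizing k with
  | nil => rfl
  | cons x l ih =>
    cases k with
    | zero => rw [subW_cons, sub_eq]; rfl
    | succ k => simpa [subW_cons, sub_eq, Nat.mul_succ] using ih k

lemma getD_subW_two_mul_add_one (l : List Bool) {k : ℕ} (hk : k < l.length) :
    (subW l).getD (2 * k + 1) false = !l.getD k false := by
  induction l generalizing k with
  | nil => simp at hk
  | cons x l ih =>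
    cases k with
    | zero => rw [subW_cons, sub_eq]; rfl
    | succ k => simpa [subW_cons, sub_eq, Nat.mul_succ] using ih (k := k) (by simpa using hk)

lemma A_succ (m : ℕ) : A (m + 1) = subW (A m) := Function.iterate_succ_apply' ..

lemma length_A (m : ℕ) : (A m).length = 2 ^ m := by
  induction m with
  | zero => rfl
  | succ m ih => rw [A_succ, length_subW, ih, pow_succ, mul_comm]

lemma A_prefix_A_succ (m : ℕ) : A m <+: A (m + 1) := by
  induction m with
  | zero => exact ⟨[true], rfl⟩
  | succ m ih =>
    obtain ⟨t, ht⟩ := ih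
    exact ⟨subW t, by rw [A_succ (m + 1), ← ht, subW_append, ← A_succ, ht]⟩

lemma A_prefix_of_le {m m' : ℕ} (h : m ≤ m') : A m <+: A m' := by
  induction m', h using Nat.le_induction with
  | base => exact List.prefix_refl _
  | succ m' _ ih => exact ih.trans (A_prefix_A_succ m')

lemma getD_A {m k : ℕ} (hk : k < 2 ^ m) : (A m).getD k false = D k := by
  have getD_of_prefix {l l' : List Bool} (h : l <+: l') (hk : k < l.length) :
      l'.getD k false = l.getD k false := by
    obtain ⟨t, rfl⟩ := h
    exact List.getD_append _ _ _ _ hk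
  rcases le_total m (k + 1) with h | h
  · exact (getD_of_prefix (A_prefix_of_le h) (by rwa [length_A])).symm
  · refine getD_of_prefix (A_prefix_of_le h) ?_
    rw [length_A]
    exact Nat.lt_two_pow_self.trans (Nat.pow_lt_pow_right (by norm_num) (by omega))

lemma two_mul_add_one_lt_two_pow (k : ℕ) : 2 * k + 1 < 2 ^ (k + 1) := by
  have := Nat.lt_two_pow_self (n := k)
  rw [pow_succ]
  omega

lemma D_two_mul (k : ℕ) : D (2 * k) = false := by
  rw [← getD_A (m := k + 1) (by have := two_mul_add_one_lt_two_pow k; omega), A_succ,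
    getD_subW_two_mul]

lemma D_two_mul_add_one (k : ℕ) : D (2 * k + 1) = !D k := by
  rw [← getD_A (two_mul_add_one_lt_two_pow k), A_succ,
    getD_subW_two_mul_add_one _ (by rw [length_A]; exact Nat.lt_two_pow_self),
    getD_A Nat.lt_two_pow_self]

lemma odd_of_D_eq_true {p : ℕ} (h : D p = true) : Odd p := by
  by_contra hp
  obtain ⟨k, rfl⟩ := Nat.not_odd_iff_even.mp hp
  rw [← two_mul, D_two_mul] at h
  contradiction

lemma D_add_one_eq_false {p : ℕ} (h : D p = true) : D (p + 1) = false := by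
  obtain ⟨k, rfl⟩ := odd_of_D_eq_true h
  rw [show 2 * k + 1 + 1 = 2 * (k + 1) by ring, D_two_mul]

lemma exists_lt_four_D_add_eq_true (p : ℕ) : ∃ k < 4, D (p + k) = true := by
  -- the window contains the odd positions `2q+1, 2q+3` (`q = p/2`), which carry `!D q, !D (q+1)`
  cases hq : D (p / 2)
  · refine ⟨2 * (p / 2) + 1 - p, by omega, ?_⟩
    rw [show p + (2 * (p / 2) + 1 - p) = 2 * (p / 2) + 1 by omega, D_two_mul_add_one, hq]
    rfl
  · refine ⟨2 * (p / 2 + 1) + 1 - p, by omega, ?_⟩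
    rw [show p + (2 * (p / 2 + 1) + 1 - p) = 2 * (p / 2 + 1) + 1 by omega, D_two_mul_add_one,
      D_add_one_eq_false hq]
    rfl

section Windows

variable {α : Type*} {f : ℕ → α}

/-- `Agree f i (i + n) m` says that `f` has period `n` on `[i, i + n + m)`. -/
def Agree (f : ℕ → α) (i j m : ℕ) : Prop := ∀ k < m, f (i + k) = f (j + k)

/-- Positions are 0-indexed, unlike in `OccursD`. -/
def OccursAt (f : ℕ → α) (w : List α) (i : ℕ) : Prop :=
  ∀ k (hk : k < w.length), f (i + k) = w[k]

lemma Agree.symm {i j m : ℕ} (h : Agree f i j m) : Agree f j i m := fun k hk => (h k hk).symm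

lemma Agree.mono {i j m m' : ℕ} (h : Agree f i j m) (hm : m' ≤ m) : Agree f i j m' :=
  fun k hk => h k (hk.trans_le hm)

lemma Agree.apply_add_eq_of_period_one {i m : ℕ} (h : Agree f i (i + 1) m) :
    ∀ k ≤ m, f (i + k) = f i
  | 0, _ => rfl
  | k + 1, hk => by
    rw [← h.apply_add_eq_of_period_one k (by omega), h k (by omega), add_right_comm, add_assoc]

lemma OccursAt.agree {w : List α} {i j : ℕ} (hi : OccursAt f w i) (hj : OccursAt f w j) :
    Agree f i j w.length :=
  fun k hk => (hi k hk).trans (hj k hk).symm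

lemma OccursAt.of_agree {w : List α} {i j : ℕ} (hi : OccursAt f w i) (h : Agree f j i w.length) :
    OccursAt f w j :=
  fun k hk => (h k hk).trans (hi k hk)

lemma occursAt_append_iff {u v : List α} {i : ℕ} :
    OccursAt f (u ++ v) i ↔ OccursAt f u i ∧ OccursAt f v (i + u.length) := by
  refine ⟨fun h => ⟨fun k hk => ?_, fun k hk => ?_⟩, fun ⟨hu, hv⟩ k hk => ?_⟩
  · have := h k (by simp; omega)
    rwa [List.getElem_append_left hk] at this
  · have := h (u.length + k) (by simp; omega)
    rw [List.getElem_append_right (by omega)] at this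
    simpa [add_assoc] using this
  · rcases lt_or_ge k u.length with hku | hku
    · simpa [List.getElem_append_left hku] using hu k hku
    · have := hv (k - u.length) (by simp at hk; omega)
      rwa [add_assoc, Nat.add_sub_cancel' hku, ← List.getElem_append_right hku] at this

lemma OccursAt.append_of_agree {w u : List α} {i : ℕ} (hw : OccursAt f w i) (hu : OccursAt f u i)
    (h : Agree f i (i + w.length) u.length) : OccursAt f (w ++ u) i :=
  occursAt_append_iff.mpr ⟨hw, hu.of_agree h.symm⟩

end Windows

lemma factorD_iff {w : List Bool} : FactorD w ↔ ∃ i, OccursAt D w i := by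
  refine ⟨fun ⟨j, _, h⟩ => ⟨j - 1, fun k hk => ?_⟩,
    fun ⟨i, h⟩ => ⟨i + 1, by omega, fun k hk => ?_⟩⟩
  · rw [h k hk, List.getD_eq_getElem]
  · rw [Nat.add_sub_cancel, h k hk, List.getD_eq_getElem]

lemma FactorD.of_append_left {u v : List Bool} (h : FactorD (u ++ v)) : FactorD u :=
  let ⟨i, hi⟩ := factorD_iff.mp h
  factorD_iff.mpr ⟨i, (occursAt_append_iff.mp hi).1⟩

lemma FactorD.exists_agree_of_append_comm {u w : List Bool} (hwu : u ++ w = w ++ u)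
    (h : FactorD (u ++ w)) : ∃ i, OccursAt D u i ∧ Agree D i (i + w.length) u.length := by
  obtain ⟨i, hi⟩ := factorD_iff.mp h
  have hu : OccursAt D u i := (occursAt_append_iff.mp hi).1
  exact ⟨i, hu, hu.agree (occursAt_append_iff.mp (hwu ▸ hi)).2⟩

lemma agree_of_agree_two_mul_add {i j m e : ℕ} (he : e ≤ 1)
    (h : Agree D (2 * i + e) (2 * j + e) (2 * m)) : Agree D i j m := by
  intro t ht
  have hodd := h (2 * t + 1 - e) (by omega)
  rwa [show 2 * i + e + (2 * t + 1 - e) = 2 * (i + t) + 1 by omega,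
    show 2 * j + e + (2 * t + 1 - e) = 2 * (j + t) + 1 by omega,
    D_two_mul_add_one, D_two_mul_add_one, Bool.not_inj_iff] at hodd

lemma Agree.two_mul_add {i j m e : ℕ} (he : e ≤ 1) (h : Agree D i j m) :
    Agree D (2 * i + e) (2 * j + e) (2 * m) := by
  intro k hk
  obtain ⟨q, hq | hq⟩ := Nat.even_or_odd' (e + k)
  · rw [show 2 * i + e + k = 2 * (i + q) by omega, show 2 * j + e + k = 2 * (j + q) by omega,
      D_two_mul, D_two_mul]
  · rw [show 2 * i + e + k = 2 * (i + q) + 1 by omega,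
      show 2 * j + e + k = 2 * (j + q) + 1 by omega, D_two_mul_add_one, D_two_mul_add_one,
      h q (by omega)]

lemma Agree.half {i m M : ℕ} (h : Agree D i (i + 2 * m) (2 * M)) :
    Agree D (i / 2) (i / 2 + m) M :=
  agree_of_agree_two_mul_add (e := i % 2) (by omega) (by
    rwa [Nat.div_add_mod, show 2 * (i / 2 + m) + i % 2 = i + 2 * m by omega])

lemma D_eq_false_of_agree_one {i : ℕ} (h : Agree D i (i + 1) 1) : D i = false := by
  cases hi : D i
  · rfl
  · have := D_add_one_eq_false hi
    rw [h.apply_add_eq_of_period_one 1 le_rfl, hi] at this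
    contradiction

lemma not_agree_of_odd {i n : ℕ} (hn : Odd n) (h3 : 3 ≤ n) : ¬ Agree D i (i + n) n := by
  intro h
  obtain ⟨k, hk, hD⟩ := exists_lt_four_D_add_eq_true i
  -- a `b` in the window is repeated `n` places later, at a position of the other parity
  obtain ⟨k', h₁, h₂⟩ : ∃ k', D (i + k') = true ∧ D (i + n + k') = true := by
    rcases lt_or_ge k n with hkn | hkn
    · exact ⟨k, hD, h k hkn ▸ hD⟩
    · have hper := h (k - n) (by omega)
      rw [show i + n + (k - n) = i + k by omega] at hper
      exact ⟨k - n, hper ▸ hD, by rwa [show i + n + (k - n) = i + k by omega]⟩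
  have := odd_of_D_eq_true h₁
  have := odd_of_D_eq_true h₂
  rw [Nat.odd_iff] at *
  omega

theorem exists_eq_two_pow_of_agree {i n : ℕ} (hn : 0 < n) (h : Agree D i (i + n) n) :
    ∃ t, n = 2 ^ t := by
  induction n using Nat.strong_induction_on generalizing i with
  | _ n ih =>
  obtain ⟨m, rfl | rfl⟩ := Nat.even_or_odd' n
  · obtain ⟨t, rfl⟩ := ih m (by omega) (by omega) h.half
    exact ⟨t + 1, by ring⟩
  · rcases Nat.eq_zero_or_pos m with rfl | hm
    · exact ⟨0, rfl⟩
    · exact absurd h (not_agree_of_odd (odd_two_mul_add_one m) (by omega))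

theorem not_agree_three_mul {i n : ℕ} (hn : 0 < n) : ¬ Agree D i (i + n) (3 * n) := by
  induction n using Nat.strong_induction_on generalizing i with
  | _ n ih =>
  intro h
  obtain ⟨m, rfl | rfl⟩ := Nat.even_or_odd' n
  · exact ih m (by omega) (by omega) (by rw [mul_left_comm] at h; exact h.half)
  · rcases Nat.eq_zero_or_pos m with rfl | hm
    · obtain ⟨k, hk, hD⟩ := exists_lt_four_D_add_eq_true i
      have hconst := h.apply_add_eq_of_period_one
      rw [hconst k (by omega)] at hD
      have := D_add_one_eq_false hD
      rw [hconst 1 (by omega), hD] at this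
      contradiction
    · exact not_agree_of_odd (odd_two_mul_add_one m) (by omega) (h.mono (by omega))

theorem exists_agree_cube {i n : ℕ} (hn : 0 < n) (h : Agree D i (i + n) n) :
    ∃ j, Agree D j i n ∧ Agree D j (j + n) (2 * n) := by
  induction n using Nat.strong_induction_on generalizing i with
  | _ n ih =>
  obtain ⟨m, rfl | rfl⟩ := Nat.even_or_odd' n
  · obtain ⟨j, hji, hj⟩ := ih m (by omega) (by omega) h.half
    refine ⟨2 * j + i % 2, ?_, ?_⟩
    · simpa only [Nat.div_add_mod] using hji.two_mul_add (e := i % 2) (by omega)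
    · have := hj.two_mul_add (e := i % 2) (by omega)
      rwa [show 2 * (j + m) + i % 2 = 2 * j + i % 2 + 2 * m by ring] at this
  · rcases Nat.eq_zero_or_pos m with rfl | hm
    · -- `D∞ = abaaabab⋯` has the cube `aaa` at position 2
      refine ⟨2, fun k hk => ?_, by unfold Agree; decide⟩
      rw [Nat.lt_one_iff.mp hk, add_zero, add_zero, D_eq_false_of_agree_one h]
      rfl
    · exact absurd h (not_agree_of_odd (odd_two_mul_add_one m) (by omega))

end PD

/-- Powers in the doubling sequence: for every nonempty word `w`, (1) if `ww` is a
factor of `D∞` then `|w|` is a power of `2`; (2) `ww` is a factor of `D∞` iff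
`www` is; (3) `wwww` is never a factor of `D∞`. -/
theorem doubling_powers (w : List Bool) (hw : w ≠ []) :
    (FactorD (w ++ w) → ∃ k : ℕ, w.length = 2 ^ k) ∧
      (FactorD (w ++ w) ↔ FactorD (w ++ w ++ w)) ∧
      ¬ FactorD (w ++ w ++ w ++ w) := by
  have hn : 0 < w.length := List.length_pos_iff.mpr hw
  refine ⟨fun h => ?_, ⟨fun h => ?_, FactorD.of_append_left⟩, fun h => ?_⟩
  · obtain ⟨i, -, hi⟩ := h.exists_agree_of_append_comm rfl
    exact exists_eq_two_pow_of_agree hn hi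
  · obtain ⟨i, hwi, hi⟩ := h.exists_agree_of_append_comm rfl
    obtain ⟨j, hji, hj⟩ := exists_agree_cube hn hi
    have hwj : OccursAt D w j := hwi.of_agree hji
    have hwwj : OccursAt D (w ++ w) j := hwj.append_of_agree hwj (hj.mono (by omega))
    rw [List.append_assoc]
    exact factorD_iff.mpr ⟨j, hwj.append_of_agree hwwj (by simpa [two_mul] using hj)⟩
  · obtain ⟨i, -, hi⟩ := h.exists_agree_of_append_comm (by simp)
    exact not_agree_three_mul hn
      (by rwa [show 3 * w.length = (w ++ w ++ w).length by simp; ring])
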